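/- Let n ≥ 1, and let α, β ∈ ℂ with A, B the roots of z² = α z - β. If u, v ∈ ℂ satisfy u^n = A, v^n = B and u·v^{} equal to an n-th root of β (i.e. (uv)^n = β), then x = u + v satisfies the de Moivre equation x^n - n (uv) x^{n-2} + (n(n-3)/2)(uv)² x^{n-4} - (n(n-4)(n-5)/6)(uv)³ x^{n-6} + ··· = α. -/

import Mathlib

/-- Integer coefficients of the de Moivre / Lucas polynomial expansion. -/
def dmC (n k : ℕ) : ℕ :=
  if k = 0 then 1 else if 2 * k ≤ n then (n - k).choose k + (n - k - 1).choose (k - 1) else 0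

lemma dmC_zero (n : ℕ) : dmC n 0 = 1 := rfl

lemma dmC_of_gt {n k : ℕ} (hk : 1 ≤ k) (h : n < 2 * k) : dmC n k = 0 := by
  unfold dmC
  rw [if_neg (by omega), if_neg (by omega)]

lemma dmC_of_le {n k : ℕ} (hk : 1 ≤ k) (h : 2 * k ≤ n) :
    dmC n k = (n - k).choose k + (n - k - 1).choose (k - 1) := by
  unfold dmC
  rw [if_neg (by omega), if_pos h]

lemma dmC_rec (n k : ℕ) (hn : 1 ≤ n) :
    dmC (n + 2) (k + 1) = dmC (n + 1) (k + 1) + dmC n k := by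
  rcases Nat.eq_zero_or_pos k with rfl | hk
  · -- k = 0
    rw [dmC_of_le (by omega) (by omega), dmC_of_le (by omega) (by omega), dmC_zero]
    simp [Nat.choose_one_right]
  · -- k ≥ 1
    by_cases h1 : 2 * (k + 1) ≤ n + 1
    · -- all three active
      rw [dmC_of_le (by omega) (by omega), dmC_of_le (by omega) (by omega),
        dmC_of_le hk (by omega)]
      have e1 : n + 2 - (k + 1) = (n + 1 - (k + 1)) + 1 := by omega
      have e2 : n + 2 - (k + 1) - 1 = (n - k - 1) + 1 := by omega
      have e3 : n + 1 - (k + 1) = n - k := by omega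
      have e4 : n + 1 - (k + 1) - 1 = n - k - 1 := by omega
      have e5 : k + 1 - 1 = (k - 1) + 1 := by omega
      rw [e2, e4, e1, e3, e5]
      rw [Nat.choose_succ_succ (n - k) k, Nat.choose_succ_succ (n - k - 1) (k - 1)]
      simp only [Nat.succ_eq_add_one]
      omega
    · by_cases h2 : 2 * (k + 1) ≤ n + 2
      · -- n = 2k, edge
        have hnk : n = 2 * k := by omega
        rw [dmC_of_le (by omega) (by omega), dmC_of_gt (by omega) (by omega),
          dmC_of_le hk (by omega)]
        subst hnk
        have e1 : 2 * k + 2 - (k + 1) = k + 1 := by omega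
        have e2 : 2 * k + 2 - (k + 1) - 1 = k := by omega
        have e3 : 2 * k - k = k := by omega
        have e4 : 2 * k - k - 1 = (k - 1) := by omega
        have e5 : k + 1 - 1 = k := by omega
        rw [e2, e4, e1, e3, e5]
        simp [Nat.choose_self]
      · -- all zero
        rw [dmC_of_gt (by omega) (by omega), dmC_of_gt (by omega) (by omega),
          dmC_of_gt (by omega) (by omega)]

/-- Padded de Moivre sum. -/
noncomputable def dmT (u v : ℂ) (n : ℕ) : ℂ :=
  ∑ k ∈ Finset.range (n + 1),
    (-1 : ℂ) ^ k * (dmC n k : ℂ) * (u + v) ^ (n - 2 * k) * (u * v) ^ k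

lemma dmT_rec (u v : ℂ) (n : ℕ) (hn : 1 ≤ n) :
    dmT u v (n + 2) = (u + v) * dmT u v (n + 1) - (u * v) * dmT u v n := by
  set x := u + v with hx
  set y := u * v with hy
  have hterm : ∀ k ∈ Finset.range (n + 2),
      (-1 : ℂ) ^ (k + 1) * (dmC (n + 2) (k + 1) : ℂ) * x ^ (n + 2 - 2 * (k + 1)) * y ^ (k + 1)
      = x * ((-1 : ℂ) ^ (k + 1) * (dmC (n + 1) (k + 1) : ℂ) * x ^ (n + 1 - 2 * (k + 1)) * y ^ (k + 1))
        - y * ((-1 : ℂ) ^ k * (dmC n k : ℂ) * x ^ (n - 2 * k) * y ^ k) := by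
    intro k _
    rw [dmC_rec n k hn]
    push_cast
    by_cases h1 : 2 * (k + 1) ≤ n + 1
    · have e1 : n + 2 - 2 * (k + 1) = (n + 1 - 2 * (k + 1)) + 1 := by omega
      have e2 : n - 2 * k = n + 2 - 2 * (k + 1) := by omega
      rw [e2, e1, pow_succ]
      ring
    · by_cases h2 : 2 * (k + 1) ≤ n + 2
      · have hz : dmC (n + 1) (k + 1) = 0 := dmC_of_gt (by omega) (by omega)
        have e1 : n + 2 - 2 * (k + 1) = 0 := by omega
        have e2 : n - 2 * k = 0 := by omega
        rw [hz, e1, e2]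
        push_cast
        ring
      · have hz1 : dmC (n + 1) (k + 1) = 0 := dmC_of_gt (by omega) (by omega)
        have hz2 : dmC n k = 0 := dmC_of_gt (by omega) (by omega)
        rw [hz1, hz2]
        push_cast
        ring
  have hS2 : dmT u v (n + 2)
      = (∑ k ∈ Finset.range (n + 2),
          (-1 : ℂ) ^ (k + 1) * (dmC (n + 2) (k + 1) : ℂ) * x ^ (n + 2 - 2 * (k + 1)) * y ^ (k + 1))
        + x ^ (n + 2) := by
    rw [dmT, Finset.sum_range_succ']
    simp [dmC_zero]
    rfl
  have hS1 : x * dmT u v (n + 1)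
      = (∑ k ∈ Finset.range (n + 2),
          x * ((-1 : ℂ) ^ (k + 1) * (dmC (n + 1) (k + 1) : ℂ) * x ^ (n + 1 - 2 * (k + 1)) * y ^ (k + 1)))
        + x ^ (n + 2) := by
    have hz : dmC (n + 1) (n + 1 + 1) = 0 := dmC_of_gt (by omega) (by omega)
    conv_lhs => rw [dmT, Finset.mul_sum, Finset.sum_range_succ']
    conv_rhs => rw [Finset.sum_range_succ]
    rw [hz, dmC_zero]
    push_cast
    ring
  have hS0 : y * dmT u v n
      = ∑ k ∈ Finset.range (n + 2),
          y * ((-1 : ℂ) ^ k * (dmC n k : ℂ) * x ^ (n - 2 * k) * y ^ k) := by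
    have hz : dmC n (n + 1) = 0 := dmC_of_gt (by omega) (by omega)
    conv_lhs => rw [dmT, Finset.mul_sum]
    conv_rhs => rw [Finset.sum_range_succ]
    rw [hz]
    push_cast
    ring
  rw [hS2, hS1, hS0, Finset.sum_congr rfl hterm, Finset.sum_sub_distrib]
  ring

lemma dmT_eq (u v : ℂ) : ∀ n : ℕ, 1 ≤ n → dmT u v n = u ^ n + v ^ n := by
  intro n
  induction n using Nat.strong_induction_on with
  | _ n ih =>
    match n with
    | 0 => intro h; exact absurd h (by norm_num)
    | 1 =>
      intro _
      simp [dmT, Finset.sum_range_succ, dmC]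
    | 2 =>
      intro _
      simp [dmT, Finset.sum_range_succ, dmC]
      ring
    | (m + 3) =>
      intro _
      rw [show m + 3 = (m + 1) + 2 from rfl, dmT_rec u v (m + 1) (by omega),
        ih (m + 2) (by omega) (by omega), ih (m + 1) (by omega) (by omega)]
      ring

theorem euler_de_moivre (n : ℕ) (hn : 1 ≤ n) (α β A B u v : ℂ)
    (hAB : A + B = α) (hABprod : A * B = β)
    (hu : u ^ n = A) (hv : v ^ n = B) (huv : (u * v) ^ n = β) :
    ∑ k ∈ Finset.range (n / 2 + 1),
        (-1 : ℂ) ^ k * ((n : ℂ) / ((n - k : ℕ) : ℂ)) * ((n - k).choose k : ℂ) *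
          (u + v) ^ (n - 2 * k) * (u * v) ^ k = α := by
  have key : (∑ k ∈ Finset.range (n / 2 + 1),
      (-1 : ℂ) ^ k * ((n : ℂ) / ((n - k : ℕ) : ℂ)) * ((n - k).choose k : ℂ) *
        (u + v) ^ (n - 2 * k) * (u * v) ^ k) = dmT u v n := by
    rw [dmT]
    rw [← Finset.sum_subset (Finset.range_subset_range.2 (by omega : n / 2 + 1 ≤ n + 1))]
    · apply Finset.sum_congr rfl
      intro k hk
      have hk2 : 2 * k ≤ n := by
        have := Finset.mem_range.1 hk; omega
      congr 2
      rcases Nat.eq_zero_or_pos k with rfl | hkpos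
      · simp [dmC_zero]
        omega
      · have hnk : 1 ≤ n - k := by omega
        have hnat : n * (n - k).choose k = (n - k) * dmC n k := by
          rw [dmC_of_le hkpos hk2]
          have h1 : (n - k) * (n - k - 1).choose (k - 1) = (n - k).choose k * k := by
            have := Nat.add_one_mul_choose_eq (n - k - 1) (k - 1)
            have e1 : n - k - 1 + 1 = n - k := by omega
            have e2 : k - 1 + 1 = k := by omega
            rw [e1, e2] at this
            exact this
          have h2 : n = (n - k) + k := by omega
          nth_rewrite 1 [h2]
          rw [add_mul, Nat.mul_add, h1]
          ring
        have hne : ((n - k : ℕ) : ℂ) ≠ 0 := by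
          exact_mod_cast (by omega : (n - k : ℕ) ≠ 0)
        have hcast : (n : ℂ) * ((n - k).choose k : ℂ) = ((n - k : ℕ) : ℂ) * (dmC n k : ℂ) := by
          exact_mod_cast hnat
        rw [mul_assoc, div_mul_eq_mul_div, hcast, mul_div_cancel_left₀ _ hne]
    · intro k hk hnk
      have h1 : n / 2 + 1 ≤ k := by
        by_contra h
        exact hnk (Finset.mem_range.2 (by omega))
      have h2 : dmC n k = 0 := dmC_of_gt (by omega) (by omega)
      rw [h2]
      push_cast
      ring
  rw [key, dmT_eq u v n hn, hu, hv, hAB]
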